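/- arXiv:2308.07240 — 6 statements merged into one kernel-verified Lean document; each statement's English description precedes it below -/
import Mathlib

section
/- For adjacent transpositions in S_n, the elements q_{jk} := q_{k-1} q_{k-j} q_{k-1} (where q_i = t_1 (t_2 t_1) ⋯ (t_i ⋯ t_1)) are involutions: q_{jk}^2 = 1 for all 1 < j < k ≤ n. -/
/-- The adjacent transposition `t_i = (i, i+1)`. -/
def t (i : ℕ) : Equiv.Perm ℕ := Equiv.swap i (i + 1)

/-- `prom k = t_{k-1} t_{k-2} ⋯ t_1` (the promotion word `∂_k`). -/
def prom : ℕ → Equiv.Perm ℕ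
  | 0 => 1
  | 1 => 1
  | (k + 2) => t (k + 1) * prom (k + 1)

/-- `qword i = t_1 (t_2 t_1) ⋯ (t_i t_{i-1} ⋯ t_1)` (the evacuation word `q_i`). -/
def qword : ℕ → Equiv.Perm ℕ
  | 0 => 1
  | (k + 1) => qword k * prom (k + 2)

/-- `q_{jk} = q_{k-1} q_{k-j} q_{k-1}`. -/
def qjk (j k : ℕ) : Equiv.Perm ℕ := qword (k - 1) * qword (k - j) * qword (k - 1)

lemma prom_spec (k x : ℕ) :
    prom (k + 2) x = if x = 1 then k + 2 else if x ≤ k + 2 then x - 1 else x := by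
  induction k with
  | zero =>
      simp only [prom, t, Equiv.Perm.mul_apply, Equiv.Perm.one_apply]
      rcases Nat.lt_or_ge x 3 with h | h
      · interval_cases x <;> simp [Equiv.swap_apply_def]
      · rw [Equiv.swap_apply_of_ne_of_ne (by omega) (by omega)]
        simp only [if_neg (by omega : ¬ x = 1), if_neg (by omega : ¬ x ≤ 2)]
  | succ k ih =>
      show (t (k + 2) * prom (k + 2)) x = _
      rw [Equiv.Perm.mul_apply, ih]
      unfold t
      rcases eq_or_ne x 1 with h1 | h1
      · subst h1
        simp [Equiv.swap_apply_def]
      · rw [if_neg h1, if_neg h1]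
        rcases Nat.lt_or_ge x (k + 3) with h | h
        · rw [if_pos (by omega), if_pos (by omega),
            Equiv.swap_apply_of_ne_of_ne (by omega) (by omega)]
        · rw [if_neg (by omega)]
          rcases eq_or_ne x (k + 3) with h3 | h3
          · subst h3
            rw [if_pos le_rfl]
            simp [Equiv.swap_apply_def]
          · rw [if_neg (by omega),
              Equiv.swap_apply_of_ne_of_ne (by omega) (by omega)]

lemma qword_spec (k x : ℕ) :
    qword k x = if 1 ≤ x ∧ x ≤ k + 1 then k + 2 - x else x := by
  induction k generalizing x with
  | zero =>
      simp only [qword, Equiv.Perm.one_apply]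
      by_cases h : 1 ≤ x ∧ x ≤ 1
      · rw [if_pos h]; omega
      · rw [if_neg h]
  | succ k ih =>
      show (qword k * prom (k + 2)) x = _
      rw [Equiv.Perm.mul_apply, prom_spec, ih]
      split_ifs <;> omega

lemma qword_sq (m : ℕ) : qword m * qword m = 1 := by
  ext x
  rw [Equiv.Perm.mul_apply, qword_spec, qword_spec, Equiv.Perm.one_apply]
  by_cases h : 1 ≤ x ∧ x ≤ m + 1
  · rw [if_pos h, if_pos (by omega)]; omega
  · rw [if_neg h, if_neg h]

/-- The elements `q_{jk} = q_{k-1} q_{k-j} q_{k-1}` are involutions. -/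
theorem qjk_involution (n j k : ℕ) (hj : 1 < j) (hjk : j < k) (hk : k ≤ n) :
    qjk j k * qjk j k = 1 := by
  unfold qjk
  have ha : ∀ x, qword (k - 1) * (qword (k - 1) * x) = x := fun x => by
    rw [← mul_assoc, qword_sq, one_mul]
  have hb : ∀ x, qword (k - j) * (qword (k - j) * x) = x := fun x => by
    rw [← mul_assoc, qword_sq, one_mul]
  calc qword (k - 1) * qword (k - j) * qword (k - 1) *
        (qword (k - 1) * qword (k - j) * qword (k - 1))
      = qword (k - 1) * (qword (k - j) * (qword (k - 1) *
        (qword (k - 1) * (qword (k - j) * qword (k - 1))))) := by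
        simp [mul_assoc]
    _ = 1 := by rw [ha, hb, qword_sq]
end

section
/- Let n ≥ 1, let w ∈ S_n be the full reversal (m ↦ n+1-m), let c = (n, n-1, ..., 2, 1) be the n-cycle m ↦ m-1 mod n, let r ≥ 0, m = r mod n, and let v_ℓ ∈ S_n reverse the interval [1, ℓ+1] (for 0 ≤ ℓ+1 ≤ n). Then the product (w c^m) v_ℓ (w c^m) equals the permutation that reverses the cyclic interval from m-ℓ to m modulo n, i.e., sends m - s (mod n) to m - ℓ + s (mod n) for 0 ≤ s ≤ ℓ, and fixes all other residues, where residues are taken in {1,...,n}. -/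
def revFun (i j m : ℕ) : ℕ := if i ≤ m ∧ m ≤ j then i + j - m else m

lemma revFun_invol (i j : ℕ) : Function.Involutive (revFun i j) := by
  intro m; unfold revFun; split_ifs <;> omega

/-- The interval-reversal permutation on `[i,j]`. -/
def rev (i j : ℕ) : Equiv.Perm ℕ := Function.Involutive.toPerm _ (revFun_invol i j)

/-- The representative of `a` modulo `n` lying in `{1, ..., n}`. -/
def resMod (a : ℤ) (n : ℕ) : ℕ := ((a - 1) % (n : ℤ)).toNat + 1

lemma resMod_pos (a : ℤ) (n : ℕ) : 1 ≤ resMod a n := by unfold resMod; omega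

lemma resMod_le (a : ℤ) (n : ℕ) (hn : 1 ≤ n) : resMod a n ≤ n := by
  have h1 := Int.emod_lt_of_pos (a-1) (show (0:ℤ) < n by exact_mod_cast hn)
  have h2 := Int.emod_nonneg (a-1) (show (n:ℤ) ≠ 0 from Int.natCast_ne_zero.mpr (by omega))
  unfold resMod; omega

lemma resMod_emod (a : ℤ) (n : ℕ) (hn : 1 ≤ n) : (resMod a n : ℤ) % n = a % n := by
  have hne : (n:ℤ) ≠ 0 := Int.natCast_ne_zero.mpr (by omega)
  have h2 := Int.emod_nonneg (a-1) hne
  unfold resMod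
  push_cast [Int.toNat_of_nonneg h2]
  rw [Int.add_emod, Int.emod_emod_of_dvd _ dvd_rfl, ← Int.add_emod]
  congr 1; ring

lemma resMod_eq_of_emod_eq {a b : ℤ} (n : ℕ) (h : a % n = b % n) :
    resMod a n = resMod b n := by
  unfold resMod
  rw [Int.sub_emod a, Int.sub_emod b, h]

lemma resMod_eq_self {a n : ℕ} (h1 : 1 ≤ a) (h2 : a ≤ n) : resMod (a:ℤ) n = a := by
  have h : ((a:ℤ) - 1) % n = (a:ℤ) - 1 := Int.emod_eq_of_lt (by omega) (by omega)
  unfold resMod; omega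

lemma resMod_eq_of {n : ℕ} (hn : 1 ≤ n) {z : ℕ} (h1 : 1 ≤ z) (h2 : z ≤ n) (a : ℤ)
    (h : ((z:ℤ) - a) % n = 0) : resMod a n = z := by
  have hez : (z:ℤ) % n = a % n := Int.emod_eq_emod_iff_emod_sub_eq_zero.mpr h
  rw [resMod_eq_of_emod_eq n hez.symm, resMod_eq_self h1 h2]

lemma prom_apply : ∀ (n : ℕ), 1 ≤ n → ∀ x,
    prom n x = if x = 1 then n else if 2 ≤ x ∧ x ≤ n then x - 1 else x
  | 0, h, _ => absurd h (by omega)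
  | 1, _, x => by
    show (1 : Equiv.Perm ℕ) x = _
    rw [Equiv.Perm.one_apply]; split_ifs <;> omega
  | (k+2), _, x => by
    have ih := prom_apply (k+1) (by omega) x
    have ht : ∀ y, t (k+1) y = if y = k+1 then k+2 else if y = k+2 then k+1 else y := by
      intro y; simp [t, Equiv.swap_apply_def]
    show (t (k+1) * prom (k+1)) x = _
    rw [Equiv.Perm.mul_apply, ih, ht]
    split_ifs <;> omega

lemma prom_apply_res (n y : ℕ) (hn : 1 ≤ n) (h1 : 1 ≤ y) (h2 : y ≤ n) :
    prom n y = resMod ((y:ℤ) - 1) n := by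
  rw [prom_apply n hn y]
  split_ifs with hy hy2
  · symm
    apply resMod_eq_of hn hn le_rfl
    rw [show (n:ℤ) - ((y:ℤ) - 1) = n from by omega]
    exact Int.emod_self
  · symm
    apply resMod_eq_of hn (by omega) (by omega)
    rw [show ((y - 1 : ℕ):ℤ) - ((y:ℤ) - 1) = 0 from by omega]
    exact Int.zero_emod _
  · omega

lemma prom_pow_apply (n m x : ℕ) (hn : 1 ≤ n) (h1 : 1 ≤ x) (h2 : x ≤ n) :
    ((prom n) ^ m) x = resMod ((x:ℤ) - m) n := by
  induction m with
  | zero =>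
    simp only [pow_zero, Equiv.Perm.one_apply, Nat.cast_zero, sub_zero]
    exact (resMod_eq_self h1 h2).symm
  | succ k ih =>
    rw [pow_succ', Equiv.Perm.mul_apply, ih]
    have hb1 := resMod_pos ((x:ℤ) - k) n
    have hb2 := resMod_le ((x:ℤ) - k) n hn
    rw [prom_apply_res n _ hn hb1 hb2]
    apply resMod_eq_of_emod_eq
    have hy := resMod_emod ((x:ℤ) - k) n hn
    rw [show (x:ℤ) - ((k+1:ℕ):ℤ) = ((x:ℤ) - k) - 1 from by push_cast; ring]
    rw [Int.sub_emod, hy, ← Int.sub_emod]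

lemma rev_apply (i j x : ℕ) : rev i j x = revFun i j x := rfl

lemma A_apply (n m x : ℕ) (hn : 1 ≤ n) (h1 : 1 ≤ x) (h2 : x ≤ n) :
    (rev 1 n * (prom n) ^ m) x = resMod ((m:ℤ) + 1 - x) n := by
  rw [Equiv.Perm.mul_apply, prom_pow_apply n m x hn h1 h2]
  set y := resMod ((x:ℤ) - m) n with hy
  have hy1 : 1 ≤ y := resMod_pos ((x:ℤ) - m) n
  have hy2 : y ≤ n := resMod_le ((x:ℤ) - m) n hn
  have hmod : (y:ℤ) % n = ((x:ℤ) - m) % n := resMod_emod ((x:ℤ) - m) n hn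
  rw [rev_apply]
  unfold revFun
  rw [if_pos ⟨hy1, hy2⟩]
  symm
  apply resMod_eq_of hn (by omega) (by omega)
  have hd : ((y:ℤ) - ((x:ℤ) - m)) % n = 0 :=
    Int.emod_eq_emod_iff_emod_sub_eq_zero.mp hmod
  rw [show ((1 + n - y : ℕ):ℤ) - ((m:ℤ) + 1 - x) = (n:ℤ) - ((y:ℤ) - ((x:ℤ) - m)) from by omega]
  rw [Int.sub_emod, Int.emod_self, hd]
  simp

/-- Let `w = rev 1 n` be the full reversal, `c = prom n` the `n`-cycle `m ↦ m-1 (mod n)`,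
`m = r mod n` (in `{1,...,n}`), and `v_ℓ = rev 1 (ℓ+1)`. Then `(w c^m) v_ℓ (w c^m)`
reverses the cyclic interval from `m-ℓ` to `m` modulo `n` (residues in `{1,...,n}`)
and fixes all other residues. -/
theorem conjugated_reversal_is_cyclic_interval_reversal
    (n r ℓ : ℕ) (hn : 1 ≤ n) (hℓ : ℓ + 1 ≤ n) :
    ∀ m : ℕ, m = resMod r n →
    ∀ g : Equiv.Perm ℕ, g = (rev 1 n * (prom n) ^ m) * rev 1 (ℓ + 1) * (rev 1 n * (prom n) ^ m) →
    (∀ s : ℕ, s ≤ ℓ → g (resMod ((m : ℤ) - s) n) = resMod ((m : ℤ) - ℓ + s) n) ∧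
    (∀ x : ℕ, 1 ≤ x → x ≤ n → (∀ s : ℕ, s ≤ ℓ → x ≠ resMod ((m : ℤ) - s) n) → g x = x) := by
  intro m hm g hg
  subst hg
  constructor
  · intro s hs
    set x := resMod ((m:ℤ) - s) n with hx
    have hx1 : 1 ≤ x := resMod_pos ((m:ℤ) - s) n
    have hx2 : x ≤ n := resMod_le ((m:ℤ) - s) n hn
    have hxmod : (x:ℤ) % n = ((m:ℤ) - s) % n := resMod_emod ((m:ℤ) - s) n hn
    rw [Equiv.Perm.mul_apply, Equiv.Perm.mul_apply, A_apply n m x hn hx1 hx2]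
    have e1 : resMod ((m:ℤ) + 1 - x) n = s + 1 := by
      apply resMod_eq_of hn (by omega) (by omega)
      have hd : ((x:ℤ) - ((m:ℤ) - s)) % n = 0 :=
        Int.emod_eq_emod_iff_emod_sub_eq_zero.mp hxmod
      rw [show ((s+1:ℕ):ℤ) - ((m:ℤ) + 1 - x) = (x:ℤ) - ((m:ℤ) - s) from by push_cast; ring]
      exact hd
    rw [e1, rev_apply]
    unfold revFun
    rw [if_pos (by omega : 1 ≤ s + 1 ∧ s + 1 ≤ ℓ + 1)]
    rw [show 1 + (ℓ + 1) - (s + 1) = ℓ + 1 - s from by omega]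
    rw [A_apply n m _ hn (by omega) (by omega)]
    apply resMod_eq_of_emod_eq
    rw [show (m:ℤ) + 1 - ((ℓ + 1 - s : ℕ):ℤ) = (m:ℤ) - ℓ + s from by omega]
  · intro x hx1 hx2 hne
    rw [Equiv.Perm.mul_apply, Equiv.Perm.mul_apply, A_apply n m x hn hx1 hx2]
    set y := resMod ((m:ℤ) + 1 - x) n with hy
    have hy1 : 1 ≤ y := resMod_pos ((m:ℤ) + 1 - x) n
    have hy2 : y ≤ n := resMod_le ((m:ℤ) + 1 - x) n hn
    have hymod : (y:ℤ) % n = ((m:ℤ) + 1 - x) % n := resMod_emod ((m:ℤ) + 1 - x) n hn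
    have hd : ((y:ℤ) - ((m:ℤ) + 1 - x)) % n = 0 :=
      Int.emod_eq_emod_iff_emod_sub_eq_zero.mp hymod
    have hyℓ : ¬ (y ≤ ℓ + 1) := by
      intro hle
      obtain ⟨sv, hys⟩ : ∃ sv, y = sv + 1 := ⟨y - 1, by omega⟩
      apply hne sv (by omega)
      symm
      apply resMod_eq_of hn hx1 hx2
      have he : ((x:ℤ)) - ((m:ℤ) - (sv:ℤ)) = (y:ℤ) - ((m:ℤ) + 1 - x) := by
        rw [hys]; push_cast; ring
      rw [he]
      exact hd
    rw [rev_apply]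
    unfold revFun
    rw [if_neg (by omega : ¬ (1 ≤ y ∧ y ≤ ℓ + 1))]
    rw [A_apply n m y hn hy1 hy2]
    apply resMod_eq_of hn hx1 hx2
    rw [show ((x:ℤ)) - ((m:ℤ) + 1 - y) = (y:ℤ) - ((m:ℤ) + 1 - x) from by ring]
    exact hd
end

section
/- Let D be a disjoint union of chains with n elements, and let f be a linear extension of D. Under promotion ∂_k, a chain that contains label i in f contains label i in ∂_k(f) when i > k, contains label i-1 when 1 < i ≤ k, and contains label k when i = 1. Equivalently, the induced action on the ordered set partition of labels is left multiplication by the cycle (k, k-1, ..., 2, 1). -/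
open Classical in
/-- The Bender-Knuth involution `t_i` acting on labelings of a poset. -/
noncomputable def BK {α : Type*} [PartialOrder α] (i : ℕ) (f : α → ℕ) : α → ℕ :=
  if ∃ a b : α, f a = i ∧ f b = i + 1 ∧ ¬ a ≤ b ∧ ¬ b ≤ a then
    fun x => if f x = i then i + 1 else if f x = i + 1 then i else f x
  else f

/-- Promotion `∂_k = t_{k-1} t_{k-2} ⋯ t_1` acting on labelings. -/
noncomputable def BKprom {α : Type*} [PartialOrder α] : ℕ → (α → ℕ) → (α → ℕ)
  | 0, f => f
  | 1, f => f
  | (k + 2), f => BK (k + 1) (BKprom (k + 1) f)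

/-- `f` is a linear extension of the finite poset `α`. -/
def IsLinExt {α : Type*} [PartialOrder α] [Fintype α] (f : α → ℕ) : Prop :=
  Set.BijOn f Set.univ (Set.Icc 1 (Fintype.card α)) ∧ ∀ a b : α, a < b → f a < f b

/-- Let `D` be a disjoint union of chains (encoded by `ch : D → ℕ` assigning chain
indices, with comparability iff equal index) and `f` a linear extension of `D`.
Under promotion `∂_k`, the chain containing label `i` in `f` contains label `i`
when `i > k`, label `i - 1` when `1 < i ≤ k`, and label `k` when `i = 1`; i.e.
the induced action on the ordered set partition of labels is left multiplication
by the cycle `(k, k-1, ..., 2, 1)`. -/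
theorem promotion_on_disjointUnionOfChains
    {D : Type*} [PartialOrder D] [Fintype D] (ch : D → ℕ)
    (hch : ∀ a b : D, (a ≤ b ∨ b ≤ a) ↔ ch a = ch b)
    (k : ℕ) (hk1 : 1 ≤ k) (hk2 : k ≤ Fintype.card D)
    (f : D → ℕ) (hf : IsLinExt f) :
    ∀ x : D, ∃ y : D, ch y = ch x ∧
      BKprom k f y = if f x = 1 then k else if f x ≤ k then f x - 1 else f x := by
  obtain ⟨hbij, -⟩ := hf
  suffices H : ∀ j, 1 ≤ j → j ≤ Fintype.card D →
      (∀ v, 1 ≤ v → v ≤ Fintype.card D → ∃ y, BKprom j f y = v) ∧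
      (∀ x : D, ∃ y : D, ch y = ch x ∧
        BKprom j f y = if f x = 1 then j else if f x ≤ j then f x - 1 else f x) from
    fun x => (H k hk1 hk2).2 x
  intro j
  induction j with
  | zero => intro h; omega
  | succ j ih =>
    intro hj1 hjn
    rcases Nat.eq_zero_or_pos j with rfl | hj
    · -- base case j + 1 = 1
      refine ⟨?_, ?_⟩
      · intro v hv1 hvn
        obtain ⟨y, -, hy⟩ := hbij.2.2 (Set.mem_Icc.mpr ⟨hv1, hvn⟩)
        exact ⟨y, hy⟩
      · intro x
        have hx1 : 1 ≤ f x := (Set.mem_Icc.mp (hbij.1 (Set.mem_univ x))).1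
        refine ⟨x, rfl, ?_⟩
        show f x = _
        split_ifs <;> omega
    · obtain ⟨m, rfl⟩ : ∃ m, j = m + 1 := ⟨j - 1, by omega⟩
      obtain ⟨hsurj, hch2⟩ := ih hj (by omega)
      set g := BKprom (m + 1) f with hg
      have hstep : ∀ z, BKprom (m + 1 + 1) f z = BK (m + 1) g z := fun z => rfl
      by_cases hA : ∃ a b : D, g a = m + 1 ∧ g b = (m + 1) + 1 ∧ ¬ a ≤ b ∧ ¬ b ≤ a
      · -- the BK involution genuinely swaps labels m+1 and m+2
        have hBK : ∀ z, BK (m + 1) g z =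
            if g z = m + 1 then m + 1 + 1 else if g z = m + 1 + 1 then m + 1 else g z := by
          intro z
          simp only [BK, if_pos hA]
        refine ⟨?_, ?_⟩
        · intro v hv1 hvn
          rcases eq_or_ne v (m + 1) with rfl | h1
          · obtain ⟨y, hy⟩ := hsurj (m + 1 + 1) (by omega) (by omega)
            refine ⟨y, ?_⟩
            rw [hstep, hBK y, hy, if_neg (by omega), if_pos rfl]
          · rcases eq_or_ne v (m + 1 + 1) with rfl | h2
            · obtain ⟨y, hy⟩ := hsurj (m + 1) (by omega) (by omega)
              refine ⟨y, ?_⟩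
              rw [hstep, hBK y, hy, if_pos rfl]
            · obtain ⟨y, hy⟩ := hsurj v hv1 hvn
              refine ⟨y, ?_⟩
              rw [hstep, hBK y, hy, if_neg h1, if_neg h2]
        · intro x
          have hx1 : 1 ≤ f x := (Set.mem_Icc.mp (hbij.1 (Set.mem_univ x))).1
          by_cases h1 : f x = 1
          · obtain ⟨a, hach, ha⟩ := hch2 x
            rw [if_pos h1] at ha
            refine ⟨a, hach, ?_⟩
            rw [hstep, hBK a, ha, if_pos rfl, if_pos h1]
          · by_cases h2 : f x = m + 1 + 1
            · obtain ⟨y, hych, hy⟩ := hch2 x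
              rw [if_neg h1, if_neg (by omega)] at hy
              refine ⟨y, hych, ?_⟩
              rw [hstep, hBK y, hy, if_neg (by omega), if_pos h2,
                if_neg h1, if_pos (by omega)]
              omega
            · obtain ⟨y, hych, hy⟩ := hch2 x
              rw [if_neg h1] at hy
              refine ⟨y, hych, ?_⟩
              by_cases h3 : f x ≤ m + 1
              · rw [if_pos h3] at hy
                rw [hstep, hBK y, hy, if_neg (by omega), if_neg (by omega),
                  if_neg h1, if_pos (by omega)]
              · rw [if_neg h3] at hy
                rw [hstep, hBK y, hy, if_neg (by omega), if_neg (by omega),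
                  if_neg h1, if_neg (by omega)]
      · -- no swap: labels m+1 and m+2 are on comparable elements (same chain)
        have hBK : ∀ z, BK (m + 1) g z = g z := by
          intro z
          simp only [BK, if_neg hA]
        refine ⟨?_, ?_⟩
        · intro v hv1 hvn
          obtain ⟨y, hy⟩ := hsurj v hv1 hvn
          exact ⟨y, by rw [hstep, hBK y, hy]⟩
        · intro x
          have hx1 : 1 ≤ f x := (Set.mem_Icc.mp (hbij.1 (Set.mem_univ x))).1
          by_cases h1 : f x = 1
          · -- label m+2 must be on the same chain as label m+1 (chain of x)
            obtain ⟨a, hach, ha⟩ := hch2 x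
            rw [if_pos h1] at ha
            obtain ⟨y, hy⟩ := hsurj (m + 1 + 1) (by omega) (by omega)
            have hcomp : a ≤ y ∨ y ≤ a := by
              by_contra hc
              push_neg at hc
              exact hA ⟨a, y, ha, hy, hc.1, hc.2⟩
            refine ⟨y, ?_, ?_⟩
            · exact (((hch a y).mp hcomp).symm).trans hach
            · rw [hstep, hBK y, hy, if_pos h1]
          · by_cases h2 : f x = m + 1 + 1
            · obtain ⟨y, hych, hy⟩ := hch2 x
              rw [if_neg h1, if_neg (by omega)] at hy
              obtain ⟨x1, -, hx1'⟩ := hbij.2.2 (Set.mem_Icc.mpr ⟨le_refl 1, by omega⟩)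
              obtain ⟨a, hach, ha⟩ := hch2 x1
              rw [if_pos hx1'] at ha
              have hcomp : a ≤ y ∨ y ≤ a := by
                by_contra hc
                push_neg at hc
                exact hA ⟨a, y, ha, by omega, hc.1, hc.2⟩
              refine ⟨a, ((hch a y).mp hcomp).trans hych, ?_⟩
              rw [hstep, hBK a, ha, if_neg h1, if_pos (by omega)]
              omega
            · obtain ⟨y, hych, hy⟩ := hch2 x
              rw [if_neg h1] at hy
              refine ⟨y, hych, ?_⟩
              by_cases h3 : f x ≤ m + 1
              · rw [if_pos h3] at hy
                rw [hstep, hBK y, hy, if_neg h1, if_pos (by omega)]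
              · rw [if_neg h3] at hy
                rw [hstep, hBK y, hy, if_neg h1, if_neg (by omega)]
end

section
/- Let D be a disjoint union of chains with n elements and f a linear extension. Under evacuation q_{k-1} = ∂_1 ∂_2 ⋯ ∂_k, a chain containing label i in f contains label i in q_{k-1}(f) when i > k, and contains label k+1-i when i ≤ k. Equivalently, the induced action on ordered set partitions is by the reversal of {1,...,k}. -/
/-- Evacuation `q_i = ∂_1 ∂_2 ⋯ ∂_{i+1}` acting on labelings
(so `BKq (k-1)` is `q_{k-1} = ∂_1 ∂_2 ⋯ ∂_k`). -/
noncomputable def BKq {α : Type*} [PartialOrder α] : ℕ → (α → ℕ) → (α → ℕ)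
  | 0, f => f
  | (k + 1), f => BKq k (BKprom (k + 2) f)

/-- The permutation of labels induced by promotion `∂_m`. -/
def promPerm : ℕ → Equiv.Perm ℕ
  | 0 => 1
  | 1 => 1
  | (k + 2) => Equiv.swap (k + 1) (k + 2) * promPerm (k + 1)

/-- The permutation of labels induced by evacuation `BKq m`. -/
def evacPerm : ℕ → Equiv.Perm ℕ
  | 0 => 1
  | (m + 1) => evacPerm m * promPerm (m + 2)

lemma promPerm_high : ∀ m j, m < j → promPerm m j = j := by
  intro m
  induction m using Nat.twoStepInduction with
  | zero => intro j _; simp [promPerm]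
  | one => intro j _; simp [promPerm]
  | more m _ ih =>
    intro j hj
    have h1 : promPerm (m + 1) j = j := ih j (by omega)
    simp only [promPerm, Equiv.Perm.mul_apply, h1]
    exact Equiv.swap_apply_of_ne_of_ne (by omega) (by omega)

lemma promPerm_one : ∀ m, 1 ≤ m → promPerm m 1 = m := by
  intro m
  induction m using Nat.twoStepInduction with
  | zero => omega
  | one => intro _; simp [promPerm]
  | more m _ ih =>
    intro _
    have h1 : promPerm (m + 1) 1 = m + 1 := ih (by omega)
    simp only [promPerm, Equiv.Perm.mul_apply, h1, Equiv.swap_apply_left]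

lemma promPerm_mid : ∀ m j, 2 ≤ j → j ≤ m → promPerm m j = j - 1 := by
  intro m
  induction m using Nat.twoStepInduction with
  | zero => intro j h1 h2; omega
  | one => intro j h1 h2; omega
  | more m _ ih =>
    intro j h1 h2
    rcases Nat.lt_or_ge j (m + 2) with h | h
    · have hmid : promPerm (m + 1) j = j - 1 := ih j h1 (by omega)
      simp only [promPerm, Equiv.Perm.mul_apply, hmid]
      exact Equiv.swap_apply_of_ne_of_ne (by omega) (by omega)
    · have hj : j = m + 2 := by omega
      subst hj
      have hhigh : promPerm (m + 1) (m + 2) = m + 2 := promPerm_high (m + 1) (m + 2) (by omega)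
      simp only [promPerm, Equiv.Perm.mul_apply, hhigh, Equiv.swap_apply_right]
      omega

lemma evacPerm_apply : ∀ m j, 1 ≤ j →
    evacPerm m j = if j ≤ m + 1 then m + 2 - j else j := by
  intro m
  induction m with
  | zero =>
    intro j hj
    simp only [evacPerm, Equiv.Perm.one_apply]
    split_ifs <;> omega
  | succ m ih =>
    intro j hj
    simp only [evacPerm, Equiv.Perm.mul_apply]
    rcases Nat.lt_or_ge j 2 with h1 | h1
    · have hj1 : j = 1 := by omega
      rw [hj1, promPerm_one (m + 2) (by omega), ih (m + 2) (by omega)]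
      split_ifs <;> omega
    · rcases le_or_gt j (m + 2) with h2 | h2
      · rw [promPerm_mid (m + 2) j h1 h2, ih (j - 1) (by omega)]
        split_ifs <;> omega
      · rw [promPerm_high (m + 2) j h2, ih j (by omega)]
        split_ifs <;> omega

section Chains

variable {D : Type*} [PartialOrder D] [Fintype D] (ch : D → ℕ)
  (hch : ∀ a b : D, (a ≤ b ∨ b ≤ a) ↔ ch a = ch b)

include hch

lemma BK_chain (g : D → ℕ) (hg : IsLinExt g) (i : ℕ) (hi : 1 ≤ i)
    (hin : i + 1 ≤ Fintype.card D) :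
    IsLinExt (BK i g) ∧
      ∀ y : D, ∃ z : D, ch z = ch y ∧ BK i g z = Equiv.swap i (i + 1) (g y) := by
  classical
  set n := Fintype.card D with hn
  have hinj : Function.Injective g := fun a b hab =>
    hg.1.2.1 (Set.mem_univ a) (Set.mem_univ b) hab
  have hmem : ∀ x : D, g x ∈ Set.Icc 1 n := fun x => hg.1.1 (Set.mem_univ x)
  have hsurj : ∀ m ∈ Set.Icc 1 n, ∃ x : D, g x = m := by
    intro m hm
    obtain ⟨x, -, hx⟩ := hg.1.2.2 hm
    exact ⟨x, hx⟩
  by_cases hC : ∃ a b : D, g a = i ∧ g b = i + 1 ∧ ¬ a ≤ b ∧ ¬ b ≤ a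
  · obtain ⟨a, b, hga, hgb, hab, hba⟩ := hC
    have hBK : ∀ x : D, BK i g x = Equiv.swap i (i + 1) (g x) := by
      intro x
      have : BK i g = fun x => if g x = i then i + 1 else if g x = i + 1 then i else g x := by
        simp only [BK]
        rw [if_pos ⟨a, b, hga, hgb, hab, hba⟩]
      rw [this, Equiv.swap_apply_def]
    constructor
    · constructor
      · constructor
        · intro x _
          have := hmem x
          simp only [Set.mem_Icc] at this ⊢
          rw [hBK x, Equiv.swap_apply_def]
          split_ifs <;> omega
        constructor
        · intro x _ y _ hxy
          rw [hBK x, hBK y] at hxy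
          exact hinj ((Equiv.swap i (i + 1)).injective hxy)
        · intro m hm
          have hm' : Equiv.swap i (i + 1) m ∈ Set.Icc 1 n := by
            simp only [Set.mem_Icc] at hm ⊢
            rw [Equiv.swap_apply_def]
            split_ifs <;> omega
          obtain ⟨x, hx⟩ := hsurj _ hm'
          refine ⟨x, Set.mem_univ x, ?_⟩
          rw [hBK x, hx, Equiv.swap_apply_self]
      · intro a' b' hab'
        have hlt : g a' < g b' := hg.2 a' b' hab'
        have h2 : g a' ≠ i ∨ g b' ≠ i + 1 := by
          by_contra hcon
          push_neg at hcon
          obtain ⟨h1', h2'⟩ := hcon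
          have : a' = a := hinj (h1'.trans hga.symm)
          have hb' : b' = b := hinj (h2'.trans hgb.symm)
          subst this; subst hb'
          exact hab hab'.le
        rw [hBK a', hBK b', Equiv.swap_apply_def, Equiv.swap_apply_def]
        split_ifs <;> omega
    · intro y
      exact ⟨y, rfl, hBK y⟩
  · have hBK : BK i g = g := by simp only [BK]; rw [if_neg hC]
    rw [hBK]
    refine ⟨hg, ?_⟩
    intro y
    by_cases h1 : g y = i
    · obtain ⟨b, hb⟩ := hsurj (i + 1) (by simp only [Set.mem_Icc]; omega)
      have hcomp : y ≤ b ∨ b ≤ y := by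
        by_contra hcon
        push_neg at hcon
        exact hC ⟨y, b, h1, hb, hcon.1, hcon.2⟩
      refine ⟨b, ((hch y b).mp hcomp).symm, ?_⟩
      rw [h1, Equiv.swap_apply_left, hb]
    · by_cases h2 : g y = i + 1
      · obtain ⟨a, ha⟩ := hsurj i (by simp only [Set.mem_Icc]; omega)
        have hcomp : a ≤ y ∨ y ≤ a := by
          by_contra hcon
          push_neg at hcon
          exact hC ⟨a, y, ha, h2, hcon.1, hcon.2⟩
        have : ch a = ch y := by
          rcases hcomp with h | h
          · exact (hch a y).mp (Or.inl h)
          · exact (hch a y).mp (Or.inr h)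
        refine ⟨a, this, ?_⟩
        rw [h2, Equiv.swap_apply_right, ha]
      · exact ⟨y, rfl, by rw [Equiv.swap_apply_of_ne_of_ne h1 h2]⟩

lemma BKprom_chain : ∀ m, m ≤ Fintype.card D → ∀ g : D → ℕ, IsLinExt g →
    IsLinExt (BKprom m g) ∧
      ∀ y : D, ∃ z : D, ch z = ch y ∧ BKprom m g z = promPerm m (g y) := by
  intro m
  induction m using Nat.twoStepInduction with
  | zero =>
    intro _ g hg
    exact ⟨hg, fun y => ⟨y, rfl, by simp [BKprom, promPerm]⟩⟩
  | one =>
    intro _ g hg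
    exact ⟨hg, fun y => ⟨y, rfl, by simp [BKprom, promPerm]⟩⟩
  | more m _ ih =>
    intro hm g hg
    obtain ⟨hlin', hrel'⟩ := ih (by omega) g hg
    obtain ⟨hlin'', hrel''⟩ := BK_chain ch hch (BKprom (m + 1) g) hlin' (m + 1) (by omega) hm
    constructor
    · exact hlin''
    · intro y
      obtain ⟨z1, hz1c, hz1⟩ := hrel' y
      obtain ⟨z2, hz2c, hz2⟩ := hrel'' z1
      refine ⟨z2, hz2c.trans hz1c, ?_⟩
      show BK (m + 1) (BKprom (m + 1) g) z2 = promPerm (m + 2) (g y)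
      rw [hz2, hz1]
      simp only [promPerm, Equiv.Perm.mul_apply]

lemma BKq_chain : ∀ m, m + 1 ≤ Fintype.card D → ∀ g : D → ℕ, IsLinExt g →
    IsLinExt (BKq m g) ∧
      ∀ y : D, ∃ z : D, ch z = ch y ∧ BKq m g z = evacPerm m (g y) := by
  intro m
  induction m with
  | zero =>
    intro _ g hg
    exact ⟨hg, fun y => ⟨y, rfl, by simp [BKq, evacPerm]⟩⟩
  | succ m ih =>
    intro hm g hg
    obtain ⟨hlin', hrel'⟩ := BKprom_chain ch hch (m + 2) hm g hg
    obtain ⟨hlin'', hrel''⟩ := ih (by omega) (BKprom (m + 2) g) hlin'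
    constructor
    · exact hlin''
    · intro y
      obtain ⟨z1, hz1c, hz1⟩ := hrel' y
      obtain ⟨z2, hz2c, hz2⟩ := hrel'' z1
      refine ⟨z2, hz2c.trans hz1c, ?_⟩
      show BKq m (BKprom (m + 2) g) z2 = evacPerm (m + 1) (g y)
      rw [hz2, hz1]
      simp only [evacPerm, Equiv.Perm.mul_apply]

end Chains

/-- Let `D` be a disjoint union of chains (encoded by `ch : D → ℕ`, with
comparability iff equal chain index) and `f` a linear extension. Under
evacuation `q_{k-1} = ∂_1 ∂_2 ⋯ ∂_k`, the chain containing label `i` in `f`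
contains label `i` when `i > k` and label `k+1-i` when `i ≤ k`; i.e. the induced
action on ordered set partitions is the reversal of `{1, ..., k}`. -/
theorem evacuation_on_disjointUnionOfChains
    {D : Type*} [PartialOrder D] [Fintype D] (ch : D → ℕ)
    (hch : ∀ a b : D, (a ≤ b ∨ b ≤ a) ↔ ch a = ch b)
    (k : ℕ) (hk1 : 1 ≤ k) (hk2 : k ≤ Fintype.card D)
    (f : D → ℕ) (hf : IsLinExt f) :
    ∀ x : D, ∃ y : D, ch y = ch x ∧
      BKq (k - 1) f y = if f x ≤ k then k + 1 - f x else f x := by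
  intro x
  obtain ⟨-, hrel⟩ := BKq_chain ch hch (k - 1) (by omega) f hf
  obtain ⟨z, hzc, hz⟩ := hrel x
  have hfx : 1 ≤ f x := (Set.mem_Icc.mp (hf.1.1 (Set.mem_univ x))).1
  refine ⟨z, hzc, ?_⟩
  rw [hz, evacPerm_apply (k - 1) (f x) hfx]
  have h1 : k - 1 + 1 = k := by omega
  have h2 : k - 1 + 2 = k + 1 := by omega
  rw [h1, h2]
end

section
/- Let D be a poset with 2 elements that is an antichain, and R = P ⊕ D ⊕ Q for any finite posets P, Q with |P| = p. Then for all i+1 < j < k, the element (t_i q_{jk})^2 fixes the labels of the elements of D in every linear extension of R. (Only t_{p+1} can affect these labels, and it occurs an even number of times in the word (t_i q_{jk})^2.) -/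
/-- `q_{jk} = q_{k-1} q_{k-j} q_{k-1}` acting on labelings. -/
noncomputable def BKqjk {α : Type*} [PartialOrder α] (j k : ℕ) (f : α → ℕ) : α → ℕ :=
  BKq (k - 1) (BKq (k - j) (BKq (k - 1) f))

instance {P Q : Type*} [Fintype P] [Fintype Q] : Fintype (P ⊕ₗ Q) :=
  inferInstanceAs (Fintype (P ⊕ Q))

/-!
In a linear extension of `P ⊕ D ⊕ Q` the two elements of `D` carry the labels `|P| + 1` and
`|P| + 2`. The involution `t_m` exchanges them when `m = |P| + 1`, since they are incomparable, and
fixes them for every other `m`: a swap of `|P|, |P| + 1` or of `|P| + 2, |P| + 3` would need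
incomparable elements on the two sides of a cut of the ordinal sum. Hence every word in the `t_m`
acts on the labels of `D` by a power of the transposition `(|P| + 1, |P| + 2)`, the same for all
linear extensions, and the square of such a word acts trivially.
-/

open Equiv Sum

section LinearExtension

variable {α : Type*} [PartialOrder α] {g : α → ℕ}

theorem BK_eq_swap_comp {m : ℕ} (h : ∃ a b : α, g a = m ∧ g b = m + 1 ∧ ¬ a ≤ b ∧ ¬ b ≤ a) :
    BK m g = swap m (m + 1) ∘ g := by
  rw [BK, if_pos h]
  funext x
  simp only [Function.comp_apply, swap_apply_def]

variable [Fintype α]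

theorem IsLinExt.injective (hg : IsLinExt g) : Function.Injective g :=
  fun _ _ h => hg.1.injOn trivial trivial h

theorem IsLinExt.apply_mem_Icc (hg : IsLinExt g) (z : α) : g z ∈ Set.Icc 1 (Fintype.card α) :=
  hg.1.mapsTo trivial

theorem IsLinExt.exists_apply_eq (hg : IsLinExt g) {v : ℕ}
    (hv : v ∈ Set.Icc 1 (Fintype.card α)) : ∃ z, g z = v := by
  obtain ⟨z, -, hz⟩ := hg.1.surjOn hv
  exact ⟨z, hz⟩

theorem IsLinExt.card_lt_apply {β : Type*} [Fintype β] (hg : IsLinExt g) {e : β → α}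
    (he : Function.Injective e) {z : α} (hlt : ∀ b, e b < z) : Fintype.card β < g z := by
  have hcard : (Finset.univ : Finset β).card ≤ (Finset.Ico 1 (g z)).card :=
    Finset.card_le_card_of_injOn (g ∘ e)
      (fun b _ => Finset.mem_Ico.2 ⟨(hg.apply_mem_Icc _).1, hg.2 _ _ (hlt b)⟩)
      ((hg.injective.comp he).injOn)
  have := (hg.apply_mem_Icc z).1
  simp only [Finset.card_univ, Nat.card_Ico] at hcard
  omega

theorem IsLinExt.apply_add_card_le {β : Type*} [Fintype β] (hg : IsLinExt g) {e : β → α}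
    (he : Function.Injective e) {z : α} (hlt : ∀ b, z < e b) :
    g z + Fintype.card β ≤ Fintype.card α := by
  have hcard : (Finset.univ : Finset β).card ≤ (Finset.Ioc (g z) (Fintype.card α)).card :=
    Finset.card_le_card_of_injOn (g ∘ e)
      (fun b _ => Finset.mem_Ioc.2 ⟨hg.2 _ _ (hlt b), (hg.apply_mem_Icc _).2⟩)
      ((hg.injective.comp he).injOn)
  have := (hg.apply_mem_Icc z).2
  simp only [Finset.card_univ, Nat.card_Ioc] at hcard
  omega

theorem IsLinExt.comp_orderIso {β : Type*} [PartialOrder β] [Fintype β] {g : β → ℕ}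
    (hg : IsLinExt g) (e : α ≃o β) : IsLinExt (g ∘ e) := by
  refine ⟨?_, fun a b hab => hg.2 _ _ (e.strictMono hab)⟩
  rw [Fintype.card_congr e.toEquiv]
  exact hg.1.comp (e.toEquiv.bijective.bijOn_univ)

theorem IsLinExt.swap_comp (hg : IsLinExt g) {m : ℕ} {a b : α} (ha : g a = m)
    (hb : g b = m + 1) (hab : ¬ a ≤ b) : IsLinExt (swap m (m + 1) ∘ g) := by
  refine ⟨(bijOn_swap (ha ▸ hg.apply_mem_Icc a) (hb ▸ hg.apply_mem_Icc b)).comp hg.1,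
    fun u w huw => ?_⟩
  have hlt := hg.2 u w huw
  -- the only pair whose order the swap reverses is `(a, b)`, which is not comparable
  have hpair : ¬ (g u = m ∧ g w = m + 1) := fun ⟨hu, hw⟩ =>
    hab (hg.injective (hu.trans ha.symm) ▸ hg.injective (hw.trans hb.symm) ▸ huw.le)
  simp only [Function.comp_apply, swap_apply_def]
  split_ifs <;> omega

theorem isLinExt_BK (hg : IsLinExt g) (m : ℕ) : IsLinExt (BK m g) := by
  by_cases h : ∃ a b : α, g a = m ∧ g b = m + 1 ∧ ¬ a ≤ b ∧ ¬ b ≤ a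
  · obtain ⟨a, b, ha, hb, hab, hba⟩ := h
    rw [BK_eq_swap_comp ⟨a, b, ha, hb, hab, hba⟩]
    exact hg.swap_comp ha hb hab
  · rwa [BK, if_neg h]

end LinearExtension

section OrdinalSum

variable {α β : Type*} [Fintype α] [Fintype β]

theorem Fintype.card_sumLex : Fintype.card (α ⊕ₗ β) = Fintype.card α + Fintype.card β :=
  Fintype.card_sum

variable [PartialOrder α] [PartialOrder β] {g : α ⊕ₗ β → ℕ}

theorem IsLinExt.apply_inl_le (hg : IsLinExt g) (a : α) :
    g (toLex (inl a)) ≤ Fintype.card α := by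
  have := hg.apply_add_card_le (e := fun b : β => toLex (inr b))
    (toLex.injective.comp inr_injective) (fun b => Lex.inl_lt_inr a b)
  rw [Fintype.card_sumLex] at this
  omega

theorem IsLinExt.card_lt_apply_inr (hg : IsLinExt g) (b : β) :
    Fintype.card α < g (toLex (inr b)) :=
  hg.card_lt_apply (e := fun a : α => toLex (inl a))
    (toLex.injective.comp inl_injective) (fun a => Lex.inl_lt_inr a b)

theorem IsLinExt.lt_of_apply_le_card_lt_apply (hg : IsLinExt g) {u w : α ⊕ₗ β}
    (hu : g u ≤ Fintype.card α) (hw : Fintype.card α < g w) : u < w := by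
  rcases u with a | b
  · rcases w with a' | b
    · exact absurd hw (hg.apply_inl_le a').not_gt
    · exact Lex.inl_lt_inr a b
  · exact absurd hu (hg.card_lt_apply_inr b).not_ge

end OrdinalSum

section ThreeSum

variable {P D Q : Type*} [PartialOrder P] [PartialOrder D] [PartialOrder Q]
  [Fintype P] [Fintype D] [Fintype Q] {g : (P ⊕ₗ D) ⊕ₗ Q → ℕ}

theorem IsLinExt.comp_sumLexAssoc_symm (hg : IsLinExt g) :
    IsLinExt (g ∘ (OrderIso.sumLexAssoc P D Q).symm) :=
  hg.comp_orderIso _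

theorem IsLinExt.apply_left_le (hg : IsLinExt g) (a : P) :
    g (toLex (inl (toLex (inl a)))) ≤ Fintype.card P :=
  hg.comp_sumLexAssoc_symm.apply_inl_le a

theorem IsLinExt.card_lt_apply_middle (hg : IsLinExt g) (x : D) :
    Fintype.card P < g (toLex (inl (toLex (inr x)))) :=
  hg.comp_sumLexAssoc_symm.card_lt_apply_inr (toLex (inl x))

theorem IsLinExt.apply_middle_le (hg : IsLinExt g) (x : D) :
    g (toLex (inl (toLex (inr x)))) ≤ Fintype.card P + Fintype.card D :=
  Fintype.card_sumLex (α := P) (β := D) ▸ hg.apply_inl_le (toLex (inr x))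

theorem IsLinExt.card_lt_apply_right (hg : IsLinExt g) (b : Q) :
    Fintype.card P + Fintype.card D < g (toLex (inr b)) :=
  Fintype.card_sumLex (α := P) (β := D) ▸ hg.card_lt_apply_inr b

theorem IsLinExt.exists_eq_middle (hg : IsLinExt g) {z : (P ⊕ₗ D) ⊕ₗ Q}
    (h₁ : Fintype.card P < g z) (h₂ : g z ≤ Fintype.card P + Fintype.card D) :
    ∃ x, z = toLex (inl (toLex (inr x))) := by
  rcases z with (a | x) | b
  · exact absurd h₁ (hg.apply_left_le a).not_gt
  · exact ⟨x, rfl⟩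
  · exact absurd h₂ (hg.card_lt_apply_right b).not_ge

theorem BK_apply_middle (hanti : ∀ a b : D, a ≤ b → a = b) (hg : IsLinExt g)
    (m : ℕ) (x : D) :
    BK m g (toLex (inl (toLex (inr x)))) =
      if Fintype.card P < m ∧ m < Fintype.card P + Fintype.card D then
        swap m (m + 1) (g (toLex (inl (toLex (inr x)))))
      else g (toLex (inl (toLex (inr x)))) := by
  have hx₁ := hg.card_lt_apply_middle x
  have hx₂ := hg.apply_middle_le x
  have hcard : Fintype.card ((P ⊕ₗ D) ⊕ₗ Q) =
      Fintype.card P + Fintype.card D + Fintype.card Q := by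
    rw [Fintype.card_sumLex, Fintype.card_sumLex]
  split_ifs with hm
  · -- the labels `m` and `m + 1` sit on two distinct, hence incomparable, elements of `D`
    obtain ⟨a, ha⟩ := hg.exists_apply_eq (v := m) ⟨by omega, by omega⟩
    obtain ⟨b, hb⟩ := hg.exists_apply_eq (v := m + 1) ⟨by omega, by omega⟩
    obtain ⟨y, rfl⟩ := hg.exists_eq_middle (z := a) (by omega) (by omega)
    obtain ⟨y', rfl⟩ := hg.exists_eq_middle (z := b) (by omega) (by omega)
    have hne : y ≠ y' := by rintro rfl; omega
    have hincomp : ∀ {y y' : D}, y ≠ y' →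
        ¬ (toLex (inl (toLex (inr y))) : (P ⊕ₗ D) ⊕ₗ Q) ≤ toLex (inl (toLex (inr y'))) :=
      fun hne hle => hne (hanti _ _ (by simpa using hle))
    rw [BK_eq_swap_comp ⟨_, _, ha, hb, hincomp hne, hincomp hne.symm⟩]
    rfl
  · by_cases hex : ∃ a b, g a = m ∧ g b = m + 1 ∧ ¬ a ≤ b ∧ ¬ b ≤ a
    · rw [BK_eq_swap_comp hex]
      obtain ⟨a, b, ha, hb, hab, -⟩ := hex
      refine swap_apply_of_ne_of_ne (fun hv => hab ?_) (fun hv => hab ?_)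
      · -- here `m = |P| + |D|`: `a` lies below the cut after `D`, and `b` above it
        refine (hg.lt_of_apply_le_card_lt_apply ?_ ?_).le <;> rw [Fintype.card_sumLex] <;> omega
      · -- here `m = |P|`: `a` lies below the cut after `P`, and `b` above it
        refine ((OrderIso.sumLexAssoc P D Q).lt_iff_lt.1
          (hg.comp_sumLexAssoc_symm.lt_of_apply_le_card_lt_apply
            (u := OrderIso.sumLexAssoc P D Q a) (w := OrderIso.sumLexAssoc P D Q b) ?_ ?_)).le <;>
          simp only [Function.comp_apply, OrderIso.symm_apply_apply] <;> omega
    · rw [BK, if_neg hex]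

end ThreeSum

section Action

variable {α ι : Type*} [PartialOrder α] [Fintype α]

def ActsOnLabelsBy (e : ι → α) (op : (α → ℕ) → α → ℕ) (π : Perm ℕ) : Prop :=
  ∀ g, IsLinExt g → IsLinExt (op g) ∧ ∀ x, op g (e x) = π (g (e x))

variable {e : ι → α}

theorem actsOnLabelsBy_id : ActsOnLabelsBy e id 1 :=
  fun _ hg => ⟨hg, fun _ => rfl⟩

theorem ActsOnLabelsBy.comp {op₁ op₂ : (α → ℕ) → α → ℕ} {π₁ π₂ : Perm ℕ}
    (h₂ : ActsOnLabelsBy e op₂ π₂) (h₁ : ActsOnLabelsBy e op₁ π₁) :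
    ActsOnLabelsBy e (op₂ ∘ op₁) (π₂ * π₁) := fun g hg =>
  ⟨(h₂ _ (h₁ g hg).1).1, fun x => by
    rw [Function.comp_apply, (h₂ _ (h₁ g hg).1).2, (h₁ g hg).2, Perm.mul_apply]⟩

variable {M : Submonoid (Perm ℕ)}

theorem exists_actsOnLabelsBy_BKprom (hBK : ∀ m, ∃ π ∈ M, ActsOnLabelsBy e (BK m) π) :
    ∀ m, ∃ π ∈ M, ActsOnLabelsBy e (BKprom m) π
  | 0 => ⟨1, M.one_mem, actsOnLabelsBy_id⟩
  | 1 => ⟨1, M.one_mem, actsOnLabelsBy_id⟩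
  | m + 2 => by
    obtain ⟨π₁, hπ₁, h₁⟩ := exists_actsOnLabelsBy_BKprom hBK (m + 1)
    obtain ⟨π₂, hπ₂, h₂⟩ := hBK (m + 1)
    exact ⟨π₂ * π₁, M.mul_mem hπ₂ hπ₁, h₂.comp h₁⟩

theorem exists_actsOnLabelsBy_BKq (hBK : ∀ m, ∃ π ∈ M, ActsOnLabelsBy e (BK m) π) :
    ∀ m, ∃ π ∈ M, ActsOnLabelsBy e (BKq m) π
  | 0 => ⟨1, M.one_mem, actsOnLabelsBy_id⟩
  | m + 1 => by
    obtain ⟨π₁, hπ₁, h₁⟩ := exists_actsOnLabelsBy_BKprom hBK (m + 2)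
    obtain ⟨π₂, hπ₂, h₂⟩ := exists_actsOnLabelsBy_BKq hBK m
    exact ⟨π₂ * π₁, M.mul_mem hπ₂ hπ₁, h₂.comp h₁⟩

theorem exists_actsOnLabelsBy_BKqjk (hBK : ∀ m, ∃ π ∈ M, ActsOnLabelsBy e (BK m) π)
    (j k : ℕ) : ∃ π ∈ M, ActsOnLabelsBy e (BKqjk j k) π := by
  obtain ⟨π₁, hπ₁, h₁⟩ := exists_actsOnLabelsBy_BKq hBK (k - 1)
  obtain ⟨π₂, hπ₂, h₂⟩ := exists_actsOnLabelsBy_BKq hBK (k - j)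
  exact ⟨π₁ * π₂ * π₁, M.mul_mem (M.mul_mem hπ₁ hπ₂) hπ₁, (h₁.comp h₂).comp h₁⟩

end Action

theorem mul_self_eq_one_of_mem_powers {G : Type*} [Monoid G] {σ π : G} (hσ : σ * σ = 1)
    (hπ : π ∈ Submonoid.powers σ) : π * π = 1 := by
  obtain ⟨n, rfl⟩ := hπ
  rw [← (Commute.refl σ).mul_pow, hσ, one_pow]

theorem actsOnLabelsBy_BK_middle {P D Q : Type*} [PartialOrder P] [PartialOrder D]
    [PartialOrder Q] [Fintype P] [Fintype D] [Fintype Q] (hD2 : Fintype.card D = 2)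
    (hanti : ∀ a b : D, a ≤ b → a = b) (m : ℕ) :
    ∃ π ∈ Submonoid.powers (swap (Fintype.card P + 1) (Fintype.card P + 2)),
      ActsOnLabelsBy (fun x : D => (toLex (inl (toLex (inr x))) : (P ⊕ₗ D) ⊕ₗ Q)) (BK m) π := by
  by_cases hm : m = Fintype.card P + 1
  · refine ⟨_, Submonoid.mem_powers _, fun g hg => ⟨isLinExt_BK hg m, fun x => ?_⟩⟩
    rw [BK_apply_middle hanti hg, if_pos (by omega), hm]
  · refine ⟨1, Submonoid.one_mem _, fun g hg => ⟨isLinExt_BK hg m, fun x => ?_⟩⟩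
    rw [BK_apply_middle hanti hg, if_neg (by omega), Perm.one_apply]

theorem cactus_element_fixes_two_element_antichain_general {P D Q : Type*}
    [PartialOrder P] [PartialOrder D] [PartialOrder Q]
    [Fintype P] [Fintype D] [Fintype Q]
    (hD2 : Fintype.card D = 2) (hanti : ∀ a b : D, a ≤ b → a = b)
    (i j k : ℕ)
    (f : ((P ⊕ₗ D) ⊕ₗ Q) → ℕ) (hf : IsLinExt f) :
    ∀ x : D, BK i (BKqjk j k (BK i (BKqjk j k f))) (toLex (Sum.inl (toLex (Sum.inr x)))) =
      f (toLex (Sum.inl (toLex (Sum.inr x)))) := by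
  intro x
  obtain ⟨π, hπ, hqjk⟩ :=
    exists_actsOnLabelsBy_BKqjk (actsOnLabelsBy_BK_middle (P := P) (Q := Q) hD2 hanti) j k
  obtain ⟨τ, hτ, hBK⟩ := actsOnLabelsBy_BK_middle (P := P) (Q := Q) hD2 hanti i
  have hsq := (hBK.comp hqjk).comp (hBK.comp hqjk)
  calc BK i (BKqjk j k (BK i (BKqjk j k f))) (toLex (inl (toLex (inr x))))
      = (τ * π * (τ * π)) (f (toLex (inl (toLex (inr x))))) := (hsq f hf).2 x
    _ = f (toLex (inl (toLex (inr x)))) := by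
      rw [mul_self_eq_one_of_mem_powers (swap_mul_self _ _) (mul_mem hτ hπ), Perm.one_apply]

/-- Let `D` be a 2-element antichain and `R = P ⊕ D ⊕ Q` an iterated ordinal sum.
Then for all `i + 1 < j < k`, the element `(t_i q_{jk})^2` fixes the labels of
the elements of `D` in every linear extension of `R`. -/
theorem cactus_element_fixes_two_element_antichain {P D Q : Type*}
    [PartialOrder P] [PartialOrder D] [PartialOrder Q]
    [Fintype P] [Fintype D] [Fintype Q]
    (hD2 : Fintype.card D = 2) (hanti : ∀ a b : D, a ≤ b → a = b)
    (i j k : ℕ) (hi : 1 ≤ i) (hij : i + 1 < j) (hjk : j < k)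
    (hk : k ≤ Fintype.card ((P ⊕ₗ D) ⊕ₗ Q))
    (f : ((P ⊕ₗ D) ⊕ₗ Q) → ℕ) (hf : IsLinExt f) :
    ∀ x : D, BK i (BKqjk j k (BK i (BKqjk j k f))) (toLex (Sum.inl (toLex (Sum.inr x)))) =
      f (toLex (Sum.inl (toLex (Sum.inr x)))) :=
  cactus_element_fixes_two_element_antichain_general hD2 hanti i j k f hf
end

section
/- If P and Q are finite posets each of which is a chain, then for the disjoint union P + Q, the Bender-Knuth involutions on linear extensions satisfy all cactus relations: t_i^2 = 1, (t_i t_j)^2 = 1 for |i-j| > 1, and (t_i q_{jk})^2 = 1 for all i+1 < j < k, where q_{jk} = q_{k-1} q_{k-j} q_{k-1} and q_i = t_1(t_2t_1)⋯(t_i⋯t_1). In other words, the disjoint union of two chains is LE-cactus. -/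
/-! ### Auxiliary material -/

/-- The transposition `(i, i+1)` as a function on `ℕ`. -/
def swN (i a : ℕ) : ℕ := if a = i then i + 1 else if a = i + 1 then i else a

/-- The cycle `m ↦ m+1` on `[1, k-1]`, `k ↦ 1`, as a function on `ℕ`. -/
def cycN (k a : ℕ) : ℕ :=
  if a = k ∧ 1 ≤ k then 1 else if 1 ≤ a ∧ a + 1 ≤ k then a + 1 else a

/-- The reversal of the interval `[1, m+1]` as a function on `ℕ`. -/
def revN (m a : ℕ) : ℕ := if 1 ≤ a ∧ a ≤ m + 1 then m + 2 - a else a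

/-- The reversal of the interval `[j, k]` as a function on `ℕ`. -/
def jkN (j k a : ℕ) : ℕ := if j ≤ a ∧ a ≤ k then j + k - a else a

lemma swN_inv (i a : ℕ) : swN i (swN i a) = a := by
  unfold swN; split_ifs <;> omega

set_option maxHeartbeats 1000000 in
lemma swN_comm4 (i j a : ℕ) (h : i + 1 < j ∨ j + 1 < i) :
    swN j (swN i (swN j (swN i a))) = a := by
  unfold swN; split_ifs <;> omega

set_option maxHeartbeats 1000000 in
lemma jkN_comm4 (i j k a : ℕ) (h2 : i + 1 < j) (h3 : j < k) :
    jkN j k (swN i (jkN j k (swN i a))) = a := by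
  unfold jkN swN; split_ifs <;> omega

section Aux

variable {P Q : Type*} [LinearOrder P] [LinearOrder Q] [Fintype P] [Fintype Q]

/-- The "word" of a labeling: whether the label `m` occurs on the `P` side. -/
def Wd (f : (P ⊕ Q) → ℕ) (m : ℕ) : Prop := ∃ p : P, f (Sum.inl p) = m

/-- A linear extension of a disjoint union of two chains is determined by its word. -/
lemma wext (f g : (P ⊕ Q) → ℕ) (hf : IsLinExt f) (hg : IsLinExt g)
    (h : ∀ m, Wd f m ↔ Wd g m) : f = g := by
  set n := Fintype.card (P ⊕ Q) with hn
  have hfl : StrictMono (fun p : P => f (Sum.inl p)) :=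
    fun a b hab => hf.2 _ _ (Sum.inl_lt_inl_iff.2 hab)
  have hgl : StrictMono (fun p : P => g (Sum.inl p)) :=
    fun a b hab => hg.2 _ _ (Sum.inl_lt_inl_iff.2 hab)
  have hfr : StrictMono (fun q : Q => f (Sum.inr q)) :=
    fun a b hab => hf.2 _ _ (Sum.inr_lt_inr_iff.2 hab)
  have hgr : StrictMono (fun q : Q => g (Sum.inr q)) :=
    fun a b hab => hg.2 _ _ (Sum.inr_lt_inr_iff.2 hab)
  have hL : (fun p : P => f (Sum.inl p)) = fun p : P => g (Sum.inl p) := by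
    rw [← StrictMono.range_inj hfl hgl]
    ext m
    simpa [Set.range, Wd] using h m
  have hrange : ∀ (F : (P ⊕ Q) → ℕ), IsLinExt F →
      Set.range (fun q : Q => F (Sum.inr q)) = {m | m ∈ Set.Icc 1 n ∧ ¬ Wd F m} := by
    intro F hF
    ext m
    constructor
    · rintro ⟨q, rfl⟩
      refine ⟨hF.1.1 (Set.mem_univ _), ?_⟩
      rintro ⟨p, hp⟩
      exact absurd (hF.1.2.1 (Set.mem_univ _) (Set.mem_univ _) hp) (by simp)
    · rintro ⟨hm, hWd⟩
      obtain ⟨x, -, hx⟩ := hF.1.2.2 hm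
      match x with
      | Sum.inl p => exact absurd ⟨p, hx⟩ hWd
      | Sum.inr q => exact ⟨q, hx⟩
  have hR : (fun q : Q => f (Sum.inr q)) = fun q : Q => g (Sum.inr q) := by
    rw [← StrictMono.range_inj hfr hgr, hrange f hf, hrange g hg]
    ext m
    simp only [Set.mem_setOf_eq, h m]
  funext x
  match x with
  | Sum.inl p => exact congrFun hL p
  | Sum.inr q => exact congrFun hR q

/-- Key step: on a linear extension of `P ⊕ Q`, `BK i` acts on the word as the
transposition `(i, i+1)`, and preserves linear extensions. -/
lemma bk_step (i : ℕ) (hi : 1 ≤ i) (hin : i + 1 ≤ Fintype.card (P ⊕ Q))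
    (f : (P ⊕ Q) → ℕ) (hf : IsLinExt f) :
    IsLinExt (BK i f) ∧ ∀ a, Wd (BK i f) a ↔ Wd f (swN i a) := by
  set n := Fintype.card (P ⊕ Q) with hn
  by_cases hc : ∃ a b : (P ⊕ Q), f a = i ∧ f b = i + 1 ∧ ¬ a ≤ b ∧ ¬ b ≤ a
  · have hBK : BK i f = fun x => swN i (f x) := by
      rw [BK, if_pos hc]
      funext x
      simp [swN]
    obtain ⟨a, b, hfa, hfb, hab, hba⟩ := hc
    have hinj := hf.1.2.1
    have hkey : ∀ x y : (P ⊕ Q), x < y → ¬(f x = i ∧ f y = i + 1) := by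
      rintro x y hxy ⟨hx, hy⟩
      have hxa : x = a := hinj (Set.mem_univ _) (Set.mem_univ _) (hx.trans hfa.symm)
      have hyb : y = b := hinj (Set.mem_univ _) (Set.mem_univ _) (hy.trans hfb.symm)
      exact hab (le_of_lt (hxa ▸ hyb ▸ hxy))
    constructor
    · rw [hBK]
      constructor
      · have hsw : Set.BijOn (swN i) (Set.Icc 1 n) (Set.Icc 1 n) := by
          refine ⟨?_, ?_, ?_⟩
          · intro m hm
            simp only [Set.mem_Icc] at hm ⊢
            unfold swN; split_ifs <;> omega
          · intro x _ y _ hxy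
            have := congrArg (swN i) hxy
            rwa [swN_inv, swN_inv] at this
          · intro m hm
            refine ⟨swN i m, ?_, swN_inv i m⟩
            simp only [Set.mem_Icc] at hm ⊢
            unfold swN; split_ifs <;> omega
        exact hsw.comp hf.1
      · intro x y hxy
        have hfxy := hf.2 x y hxy
        have hk := hkey x y hxy
        have hk' : f x ≠ i ∨ f y ≠ i + 1 := by tauto
        show swN i (f x) < swN i (f y)
        unfold swN
        split_ifs <;> omega
    · intro m
      rw [hBK]
      constructor
      · rintro ⟨p, hp⟩
        refine ⟨p, ?_⟩
        show f (Sum.inl p) = swN i m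
        rw [← hp]
        show f (Sum.inl p) = swN i (swN i (f (Sum.inl p)))
        rw [swN_inv]
      · rintro ⟨p, hp⟩
        refine ⟨p, ?_⟩
        show swN i (f (Sum.inl p)) = m
        rw [hp, swN_inv]
  · have hBK : BK i f = f := by rw [BK, if_neg hc]
    obtain ⟨a, -, hfa⟩ := hf.1.2.2 (Set.mem_Icc.2 ⟨hi, by omega⟩ : i ∈ Set.Icc 1 n)
    obtain ⟨b, -, hfb⟩ := hf.1.2.2 (Set.mem_Icc.2 ⟨by omega, hin⟩ : i + 1 ∈ Set.Icc 1 n)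
    have hcomp : a ≤ b ∨ b ≤ a := by
      by_contra hcon
      push_neg at hcon
      exact hc ⟨a, b, hfa, hfb, hcon.1, hcon.2⟩
    have hWa : Wd f i ↔ ∃ p : P, a = Sum.inl p := by
      constructor
      · rintro ⟨p, hp⟩
        exact ⟨p, (hf.1.2.1 (Set.mem_univ _) (Set.mem_univ _) (hp.trans hfa.symm)).symm⟩
      · rintro ⟨p, rfl⟩; exact ⟨p, hfa⟩
    have hWb : Wd f (i + 1) ↔ ∃ p : P, b = Sum.inl p := by
      constructor
      · rintro ⟨p, hp⟩
        exact ⟨p, (hf.1.2.1 (Set.mem_univ _) (Set.mem_univ _) (hp.trans hfb.symm)).symm⟩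
      · rintro ⟨p, rfl⟩; exact ⟨p, hfb⟩
    have hiff : Wd f i ↔ Wd f (i + 1) := by
      rw [hWa, hWb]
      match a, b with
      | Sum.inl p, Sum.inl p' => simp
      | Sum.inl p, Sum.inr q' =>
        rcases hcomp with hh | hh
        · exact absurd hh Sum.not_inl_le_inr
        · exact absurd hh Sum.not_inr_le_inl
      | Sum.inr q, Sum.inl p' =>
        rcases hcomp with hh | hh
        · exact absurd hh Sum.not_inr_le_inl
        · exact absurd hh Sum.not_inl_le_inr
      | Sum.inr q, Sum.inr q' => simp
    rw [hBK]
    refine ⟨hf, fun m => ?_⟩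
    unfold swN
    split_ifs with h1 h2
    · subst h1; exact hiff
    · subst h2; exact hiff.symm
    · exact Iff.rfl

/-- On a linear extension, promotion `BKprom k` acts on the word as the cycle `cycN k`. -/
lemma prom_step : ∀ k : ℕ, k ≤ Fintype.card (P ⊕ Q) → ∀ f : (P ⊕ Q) → ℕ, IsLinExt f →
    IsLinExt (BKprom k f) ∧ ∀ a, Wd (BKprom k f) a ↔ Wd f (cycN k a) := by
  intro k
  induction k using Nat.twoStepInduction with
  | zero =>
    intro _ f hf
    refine ⟨hf, fun a => ?_⟩
    rw [show cycN 0 a = a by unfold cycN; split_ifs <;> omega]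
    exact Iff.rfl
  | one =>
    intro _ f hf
    refine ⟨hf, fun a => ?_⟩
    rw [show cycN 1 a = a by unfold cycN; split_ifs <;> omega]
    exact Iff.rfl
  | more k _ ih =>
    intro hk f hf
    have h1 := ih (by omega) f hf
    have h2 := bk_step (k + 1) (by omega) (by omega) _ h1.1
    have hE : BKprom (k + 2) f = BK (k + 1) (BKprom (k + 1) f) := rfl
    rw [hE]
    refine ⟨h2.1, fun a => ?_⟩
    rw [show cycN (k + 2) a = cycN (k + 1) (swN (k + 1) a) by
      unfold cycN swN; split_ifs <;> omega]
    exact (h2.2 a).trans (h1.2 _)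

/-- On a linear extension, evacuation `BKq m` acts on the word as the reversal `revN m`. -/
lemma q_step : ∀ m : ℕ, m + 1 ≤ Fintype.card (P ⊕ Q) → ∀ f : (P ⊕ Q) → ℕ, IsLinExt f →
    IsLinExt (BKq m f) ∧ ∀ a, Wd (BKq m f) a ↔ Wd f (revN m a) := by
  intro m
  induction m with
  | zero =>
    intro _ f hf
    refine ⟨hf, fun a => ?_⟩
    rw [show revN 0 a = a by unfold revN; split_ifs <;> omega]
    exact Iff.rfl
  | succ m ih =>
    intro hm f hf
    have hp := prom_step (m + 2) (by omega) f hf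
    have hq := ih (by omega) _ hp.1
    have hE : BKq (m + 1) f = BKq m (BKprom (m + 2) f) := rfl
    rw [hE]
    refine ⟨hq.1, fun a => ?_⟩
    rw [show revN (m + 1) a = cycN (m + 2) (revN m a) by
      unfold cycN revN; split_ifs <;> omega]
    exact (hq.2 a).trans (hp.2 _)

/-- On a linear extension, `BKqjk j k` acts on the word as the reversal of `[j, k]`. -/
lemma qjk_step (j k : ℕ) (hj : 1 ≤ j) (hjk : j ≤ k) (hk : k ≤ Fintype.card (P ⊕ Q))
    (f : (P ⊕ Q) → ℕ) (hf : IsLinExt f) :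
    IsLinExt (BKqjk j k f) ∧ ∀ a, Wd (BKqjk j k f) a ↔ Wd f (jkN j k a) := by
  have h1 := q_step (k - 1) (by omega) f hf
  have h2 := q_step (k - j) (by omega) _ h1.1
  have h3 := q_step (k - 1) (by omega) _ h2.1
  have hE : BKqjk j k f = BKq (k - 1) (BKq (k - j) (BKq (k - 1) f)) := rfl
  rw [hE]
  refine ⟨h3.1, fun a => ?_⟩
  rw [show jkN j k a = revN (k - 1) (revN (k - j) (revN (k - 1) a)) by
    unfold jkN revN; split_ifs <;> omega]
  exact (h3.2 a).trans ((h2.2 _).trans (h1.2 _))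

end Aux

/-- The disjoint union `P + Q` of two chains is LE-cactus: on every linear
extension, the Bender-Knuth involutions satisfy `t_i^2 = 1`, `(t_i t_j)^2 = 1`
for `|i - j| > 1`, and the cactus relations `(t_i q_{jk})^2 = 1` for all
`i + 1 < j < k`. -/
theorem disjointUnion_of_two_chains_LE_cactus {P Q : Type*}
    [LinearOrder P] [LinearOrder Q] [Fintype P] [Fintype Q]
    (f : (P ⊕ Q) → ℕ) (hf : IsLinExt f) :
    (∀ i : ℕ, 1 ≤ i → i ≤ Fintype.card (P ⊕ Q) - 1 → BK i (BK i f) = f) ∧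
    (∀ i j : ℕ, 1 ≤ i → 1 ≤ j → i ≤ Fintype.card (P ⊕ Q) - 1 →
      j ≤ Fintype.card (P ⊕ Q) - 1 → (1 : ℤ) < |(i : ℤ) - (j : ℤ)| →
      BK i (BK j (BK i (BK j f))) = f) ∧
    (∀ i j k : ℕ, 1 ≤ i → i + 1 < j → j < k → k ≤ Fintype.card (P ⊕ Q) →
      BK i (BKqjk j k (BK i (BKqjk j k f))) = f) := by
  refine ⟨?_, ?_, ?_⟩
  · -- t_i² = 1
    intro i h1 h2
    have hin : i + 1 ≤ Fintype.card (P ⊕ Q) := by omega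
    have s1 := bk_step i h1 hin f hf
    have s2 := bk_step i h1 hin _ s1.1
    refine wext _ _ s2.1 hf fun m => ?_
    rw [s2.2 m, s1.2, swN_inv]
  · -- (t_i t_j)² = 1 for |i - j| > 1
    intro i j h1 h2 h3 h4 h5
    have hij : i + 1 < j ∨ j + 1 < i := by
      rcases abs_cases ((i : ℤ) - (j : ℤ)) with ⟨hh, -⟩ | ⟨hh, -⟩ <;> rw [hh] at h5 <;> omega
    have hin : i + 1 ≤ Fintype.card (P ⊕ Q) := by omega
    have hjn : j + 1 ≤ Fintype.card (P ⊕ Q) := by omega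
    have s1 := bk_step j h2 hjn f hf
    have s2 := bk_step i h1 hin _ s1.1
    have s3 := bk_step j h2 hjn _ s2.1
    have s4 := bk_step i h1 hin _ s3.1
    refine wext _ _ s4.1 hf fun m => ?_
    rw [s4.2 m, s3.2, s2.2, s1.2, swN_comm4 i j m hij]
  · -- (t_i q_{jk})² = 1 for i + 1 < j < k
    intro i j k h1 h2 h3 h4
    have hj1 : 1 ≤ j := by omega
    have hjk : j ≤ k := by omega
    have hin : i + 1 ≤ Fintype.card (P ⊕ Q) := by omega
    have s1 := qjk_step j k hj1 hjk h4 f hf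
    have s2 := bk_step i h1 hin _ s1.1
    have s3 := qjk_step j k hj1 hjk h4 _ s2.1
    have s4 := bk_step i h1 hin _ s3.1
    refine wext _ _ s4.1 hf fun m => ?_
    rw [s4.2 m, s3.2, s2.2, s1.2, jkN_comm4 i j k m h2 h3]
end
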